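/- In the clique-interdiction flow construction: for every x ∈ X* and every path P' as guaranteed (x_{P'} = 1 and a_s, a_t ∈ P'), there are r̄ := n−r paths Q_1,…,Q_{r̄} ∈ 𝒫 such that x_{Q_i} = 1 and |Q_i ∩ {a_v¹ : v ∈ V}| = 1 for all i ∈ [r̄]; moreover, a_v¹ ∈ P' for every v ∈ V for which a_v¹ ∉ Q_i for all i ∈ [r̄]. -/

import Mathlib

open scoped BigOperators

/-- A directed multigraph: arcs `A` with tail and head maps into a vertex type `V`. -/
structure MultiDigraph (V : Type) (A : Type) where
  tail : A → V
  head : A → V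

namespace MultiDigraph

variable {V A : Type}

/-- `p` is (the arc list of) a simple directed `s`-`t`-path in `D`. -/
def IsPath (D : MultiDigraph V A) (s t : V) (p : List A) : Prop :=
  p ≠ [] ∧ List.Chain' (fun a b => D.head a = D.tail b) p ∧
    (p.map D.tail).head? = some s ∧ (p.map D.head).getLast? = some t ∧
    (p.map D.tail ++ [t]).Nodup

/-- The set of simple `s`-`t`-paths of `D`. -/
def pathSet (D : MultiDigraph V A) (s t : V) : Set (List A) := {p | D.IsPath s t p}

/-- `x` is a feasible `s`-`t` path flow with respect to capacities `u`. -/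
def IsFlow (D : MultiDigraph V A) (s t : V) (u : A → ℚ) (x : List A → ℚ) : Prop :=
  (∀ p, 0 ≤ x p) ∧ (∀ p, x p ≠ 0 → D.IsPath s t p) ∧
    ∀ a : A, (∑ᶠ p ∈ {p : List A | D.IsPath s t p ∧ a ∈ p}, x p) ≤ u a

/-- The value of a path flow. -/
noncomputable def value (D : MultiDigraph V A) (s t : V) (x : List A → ℚ) : ℚ :=
  ∑ᶠ p ∈ D.pathSet s t, x p

/-- `λ(x,S)`: the amount of flow on paths meeting `S`. -/
noncomputable def loss (D : MultiDigraph V A) (s t : V) (x : List A → ℚ) (S : Set A) : ℚ :=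
  ∑ᶠ p ∈ {p : List A | D.IsPath s t p ∧ ∃ a ∈ S, a ∈ p}, x p

/-- The amount of flow surviving the failure of `S`. -/
noncomputable def survival (D : MultiDigraph V A) (s t : V) (x : List A → ℚ) (S : Set A) : ℚ :=
  ∑ᶠ p ∈ {p : List A | D.IsPath s t p ∧ ∀ a ∈ S, a ∉ p}, x p

/-- A feasible multicommodity path flow meeting all demands exactly. -/
def IsMultiFlow {K : Type} (D : MultiDigraph V A) (u : A → ℚ)
    (src snk : K → V) (dem : K → ℚ) (x : K → List A → ℚ) : Prop :=
  (∀ i p, 0 ≤ x i p) ∧ (∀ i p, x i p ≠ 0 → D.IsPath (src i) (snk i) p) ∧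
    (∀ a : A,
      (∑ᶠ i : K, ∑ᶠ p ∈ {p : List A | D.IsPath (src i) (snk i) p ∧ a ∈ p}, x i p) ≤ u a) ∧
    (∀ i : K, (∑ᶠ p ∈ D.pathSet (src i) (snk i), x i p) = dem i)

/-- `λ(x,S)` for a multicommodity flow. -/
noncomputable def multiLoss {K : Type} (D : MultiDigraph V A)
    (src snk : K → V) (x : K → List A → ℚ) (S : Set A) : ℚ :=
  ∑ᶠ i : K, ∑ᶠ p ∈ {p : List A | D.IsPath (src i) (snk i) p ∧ ∃ a ∈ S, a ∈ p}, x i p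

end MultiDigraph

/-- `S` is a legal failure scenario for compatibility graph `H` and budget `k`:
a clique of `H` of cardinality at most `k`. -/
def cliqueScenario {A : Type} (H : SimpleGraph A) (k : ℕ) (S : Set A) : Prop :=
  S.Finite ∧ S.ncard ≤ k ∧ H.IsClique S

section CliqueInterdiction

/-- Nodes of the clique-interdiction flow construction. -/
inductive CNode (n : ℕ) : Type
  | s | s0 | s1 | t0 | t1 | t
  | v (i : Fin (n + 1))
  | y (i : Fin n) (b : Bool)
  | z (i : Fin n) (b : Bool)

/-- Arcs of the clique-interdiction flow construction (all of capacity 1);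
`b = false` stands for superscript `0` and `b = true` for superscript `1`;
the bundle `A_{st}` has `k − 2 = ℓ − 1` arcs. -/
inductive CArc (n r ℓ : ℕ) : Type
  | as                          -- a_s = (s, v_1)
  | at'                         -- a_t = (v_{n+1}, t)
  | vy (i : Fin n) (b : Bool)   -- (v_i, y_i^b)
  | yz (i : Fin n) (b : Bool)   -- a^b_{v_i} = (y_i^b, z_i^b)
  | zv (i : Fin n) (b : Bool)   -- (z_i^b, v_{i+1})
  | as0 (j : Fin r)             -- bundle A_s⁰: (s, s⁰)
  | at0 (j : Fin r)             -- bundle A_t⁰: (t⁰, t)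
  | s0y (i : Fin n)             -- (s⁰, y_i⁰)
  | zt0 (i : Fin n)             -- (z_i⁰, t⁰)
  | as1 (j : Fin (n - r))       -- bundle A_s¹: (s, s¹)
  | at1 (j : Fin (n - r))       -- bundle A_t¹: (t¹, t)
  | s1y (i : Fin n)             -- (s¹, y_i¹)
  | zt1 (i : Fin n)             -- (z_i¹, t¹)
  | ast (j : Fin (ℓ - 1))       -- bundle A_{st}: (s, t)

variable (n r ℓ : ℕ)

/-- The digraph of the clique-interdiction flow construction. -/
def cD : MultiDigraph (CNode n) (CArc n r ℓ) where
  tail a :=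
    match a with
    | .as => .s
    | .at' => .v (Fin.last n)
    | .vy i _ => .v i.castSucc
    | .yz i b => .y i b
    | .zv i b => .z i b
    | .as0 _ => .s
    | .at0 _ => .t0
    | .s0y _ => .s0
    | .zt0 i => .z i false
    | .as1 _ => .s
    | .at1 _ => .t1
    | .s1y _ => .s1
    | .zt1 i => .z i true
    | .ast _ => .s
  head a :=
    match a with
    | .as => .v 0
    | .at' => .t
    | .vy i b => .y i b
    | .yz i b => .z i b
    | .zv i _ => .v i.succ
    | .as0 _ => .s0
    | .at0 _ => .t
    | .s0y i => .y i false
    | .zt0 _ => .t0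
    | .as1 _ => .s1
    | .at1 _ => .t
    | .s1y i => .y i true
    | .zt1 _ => .t1
    | .ast _ => .t

/-- The set `S̄ := A_{st} ∪ {a_s, a_t}`. -/
def inSbar : CArc n r ℓ → Prop
  | .as => True
  | .at' => True
  | .ast _ => True
  | _ => False

/-- The compatibility graph of the clique-interdiction flow construction:
`{a_v¹, a_w¹}` for every edge `{v,w}` of `G`, `{a_s, a_v¹}` for every vertex `v`,
and all 2-element subsets of `S̄`. -/
def cH (G : SimpleGraph (Fin n)) : SimpleGraph (CArc n r ℓ) :=
  SimpleGraph.fromRel (fun x y =>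
    (∃ i j : Fin n, G.Adj i j ∧ x = CArc.yz i true ∧ y = CArc.yz j true) ∨
    (∃ i : Fin n, x = CArc.as ∧ y = CArc.yz i true) ∨
    (inSbar n r ℓ x ∧ inSbar n r ℓ y))

/-- Membership in `X*`: an integral `s`-`t` path flow of value `θ = n + ℓ` (unit
capacities) with `λ(x,S) ≤ k − 1 = ℓ` for every clique scenario `S ∈ S_{H,k}`,
`k = ℓ + 1`. -/
def memXstar (G : SimpleGraph (Fin n)) (x : List (CArc n r ℓ) → ℚ) : Prop :=
  (cD n r ℓ).IsFlow CNode.s CNode.t (fun _ => 1) x ∧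
  (∀ p, ∃ zp : ℤ, x p = (zp : ℚ)) ∧
  (cD n r ℓ).value CNode.s CNode.t x = (n : ℚ) + (ℓ : ℚ) ∧
  (∀ S : Set (CArc n r ℓ), cliqueScenario (cH n r ℓ G) (ℓ + 1) S →
    (cD n r ℓ).loss CNode.s CNode.t x S ≤ (ℓ : ℚ))

end CliqueInterdiction

/-!
The `n + ℓ` arcs leaving `s` have unit capacity and every path uses exactly one of them, so a flow
of value `n + ℓ` saturates them; being integral, it consists of `n + ℓ` unit paths, one through
each of them. Now count the arcs `a_v^b` on these paths: the path `P'` through `a_s` and `a_t` uses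
one of `a_v⁰, a_v¹` for every `v`, each path through `A_s⁰` or `A_s¹` uses at least one, and the
paths through `A_{st}` use none. That makes at least `n + r + (n - r) = 2n`, the total capacity of
these arcs, so every bound is tight: each path `Q_i` through `A_s¹` meets exactly one `a_v¹`, each
path through `A_s⁰` exactly one arc, some `a_w⁰`, and every `a_v^b` carries flow. An `a_v¹` missed
by all `Q_i` therefore lies on `P'`.
-/

open Finset

lemma Finset.exists_eq_one_of_sum_eq_one {ι R : Type*} [Semiring R] [LinearOrder R]
    [IsStrictOrderedRing R] {s : Finset ι} {f : ι → R} (h0 : ∀ i ∈ s, 0 ≤ f i)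
    (h1 : ∀ i ∈ s, f i ≠ 0 → 1 ≤ f i) (hs : ∑ i ∈ s, f i = 1) :
    ∃ i ∈ s, f i = 1 ∧ ∀ j ∈ s, f j ≠ 0 → j = i := by
  classical
  obtain ⟨i, hi, hfi⟩ := exists_ne_zero_of_sum_ne_zero (s := s) (f := f) (by simp [hs])
  refine ⟨i, hi, le_antisymm (hs ▸ single_le_sum h0 hi) (h1 i hi hfi), fun j hj hfj => ?_⟩
  by_contra hji
  have hpair : f j + f i ≤ 1 := by
    rw [← sum_pair hji, ← hs]
    exact sum_le_sum_of_subset_of_nonneg (by simp [insert_subset_iff, hi, hj])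
      fun k hk _ => h0 k hk
  have h2 : (2 : R) ≤ 1 := calc
    (2 : R) = 1 + 1 := one_add_one_eq_two.symm
    _ ≤ f j + f i := add_le_add (h1 j hj hfj) (h1 i hi hfi)
    _ ≤ 1 := hpair
  exact one_lt_two.not_ge h2

namespace MultiDigraph

variable {V A : Type} {D : MultiDigraph V A} {s t : V} {p : List A}

lemma IsPath.nodup_tails (hp : D.IsPath s t p) : (p.map D.tail).Nodup :=
  (List.nodup_append.mp hp.2.2.2.2).1

lemma IsPath.eq_of_tail_eq (hp : D.IsPath s t p) {a b : A} (ha : a ∈ p) (hb : b ∈ p)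
    (h : D.tail a = D.tail b) : a = b :=
  List.inj_on_of_nodup_map hp.nodup_tails ha hb h

lemma IsPath.tail_getElem_zero (hp : D.IsPath s t p) (h : 0 < p.length) :
    D.tail p[0] = s := by
  simpa [List.head?_map, List.head?_eq_getElem?, List.getElem?_eq_getElem h] using hp.2.2.1

lemma IsPath.head_getLast (hp : D.IsPath s t p) : D.head (p.getLast hp.1) = t := by
  simpa [List.getLast?_map, List.getLast?_eq_some_getLast hp.1] using hp.2.2.2.1

lemma IsPath.exists_cons (hp : D.IsPath s t p) : ∃ a l, p = a :: l ∧ D.tail a = s := by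
  obtain ⟨a, l, rfl⟩ := List.exists_cons_of_ne_nil hp.1
  exact ⟨a, l, rfl, hp.tail_getElem_zero (by simp)⟩

lemma IsPath.eq_cons_of_tail_eq (hp : D.IsPath s t p) {a : A} (ha : a ∈ p)
    (h : D.tail a = s) : ∃ l, p = a :: l := by
  obtain ⟨b, l, rfl, hb⟩ := hp.exists_cons
  obtain rfl : a = b := hp.eq_of_tail_eq ha (by simp) (h.trans hb.symm)
  exact ⟨l, rfl⟩

lemma IsPath.exists_pred (hp : D.IsPath s t p) {a : A} (ha : a ∈ p) (h : D.tail a ≠ s) :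
    ∃ b ∈ p, D.head b = D.tail a := by
  obtain ⟨i, hi, rfl⟩ := List.getElem_of_mem ha
  obtain _ | i := i
  · exact absurd (hp.tail_getElem_zero hi) h
  · exact ⟨p[i], List.getElem_mem _, hp.2.1.getElem i hi⟩

lemma IsPath.exists_succ (hp : D.IsPath s t p) {a : A} (ha : a ∈ p) (h : D.head a ≠ t) :
    ∃ b ∈ p, D.tail b = D.head a := by
  obtain ⟨i, hi, rfl⟩ := List.getElem_of_mem ha
  by_cases hi' : i + 1 < p.length
  · exact ⟨p[i + 1], List.getElem_mem _, (hp.2.1.getElem i hi').symm⟩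
  · refine absurd ?_ h
    rw [← hp.head_getLast, List.getLast_eq_getElem]
    congr 2
    omega

lemma finite_pathSet [Finite V] [Finite A] : (D.pathSet s t).Finite := by
  have := Fintype.ofFinite V
  refine (List.finite_length_le A (Fintype.card V)).subset fun p hp => ?_
  simpa using (IsPath.nodup_tails hp).length_le_card

def IsUnitPathDecomposition (D : MultiDigraph V A) (s t : V) (x : List A → ℚ)
    (P : A → List A) : Prop :=
  ∀ a, D.tail a = s → D.IsPath s t (P a) ∧ x (P a) = 1 ∧ ∀ q, x q ≠ 0 → (a ∈ q ↔ q = P a)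

section Finite

variable [Fintype A] [DecidableEq V]

def outArcs (D : MultiDigraph V A) (s : V) : Finset A :=
  {a | D.tail a = s}

lemma mem_outArcs {a : A} : a ∈ D.outArcs s ↔ D.tail a = s := by
  simp [outArcs]

lemma IsPath.card_outArcs_filter_mem [DecidableEq A] (hp : D.IsPath s t p) :
    #{a ∈ D.outArcs s | a ∈ p} = 1 := by
  obtain ⟨a, l, rfl, ha⟩ := hp.exists_cons
  refine card_eq_one.mpr ⟨a, ext fun b => ?_⟩
  simp only [mem_filter, mem_outArcs, mem_singleton]
  exact ⟨fun hb => hp.eq_of_tail_eq hb.2 (by simp) (hb.1.trans ha.symm),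
    by rintro rfl; simp [ha]⟩

end Finite

namespace IsUnitPathDecomposition

variable {x : List A → ℚ} {P : A → List A}

lemma isPath (hP : D.IsUnitPathDecomposition s t x P) {a : A} (ha : D.tail a = s) :
    D.IsPath s t (P a) :=
  (hP a ha).1

lemma apply_eq_one (hP : D.IsUnitPathDecomposition s t x P) {a : A} (ha : D.tail a = s) :
    x (P a) = 1 :=
  (hP a ha).2.1

lemma mem_self (hP : D.IsUnitPathDecomposition s t x P) {a : A} (ha : D.tail a = s) :
    a ∈ P a :=
  ((hP a ha).2.2 _ (by simp [hP.apply_eq_one ha])).2 rfl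

lemma eq_of_mem (hP : D.IsUnitPathDecomposition s t x P) {a : A} (ha : D.tail a = s)
    {q : List A} (hq : x q ≠ 0) (haq : a ∈ q) : q = P a :=
  ((hP a ha).2.2 q hq).1 haq

lemma exists_eq_of_ne_zero (hP : D.IsUnitPathDecomposition s t x P)
    (hsupp : ∀ p, x p ≠ 0 → D.IsPath s t p) {q : List A} (hq : x q ≠ 0) :
    ∃ a, D.tail a = s ∧ q = P a := by
  obtain ⟨a, l, rfl, ha⟩ := (hsupp q hq).exists_cons
  exact ⟨a, ha, hP.eq_of_mem ha hq (by simp)⟩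

lemma injOn (hP : D.IsUnitPathDecomposition s t x P) : Set.InjOn P {a | D.tail a = s} :=
  fun _ ha _ hb hab =>
  (hP.isPath ha).eq_of_tail_eq (hP.mem_self ha) (hab ▸ hP.mem_self hb) (ha.trans hb.symm)

lemma finsum_eq_card [Fintype A] [DecidableEq A] [DecidableEq V]
    (hP : D.IsUnitPathDecomposition s t x P) (hsupp : ∀ p, x p ≠ 0 → D.IsPath s t p) (b : A) :
    ∑ᶠ p ∈ {p | D.IsPath s t p ∧ b ∈ p}, x p = #{a ∈ D.outArcs s | b ∈ P a} := by
  have hsupport : {p | D.IsPath s t p ∧ b ∈ p} ∩ Function.support x =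
      (({a ∈ D.outArcs s | b ∈ P a}.image P : Finset (List A)) : Set (List A)) := by
    ext q
    simp only [Set.mem_inter_iff, Set.mem_ofPred_eq, Function.mem_support, coe_image,
      coe_filter, mem_outArcs, Set.mem_image]
    constructor
    · rintro ⟨⟨-, hbq⟩, hq⟩
      obtain ⟨a, ha, rfl⟩ := hP.exists_eq_of_ne_zero hsupp hq
      exact ⟨a, ⟨ha, hbq⟩, rfl⟩
    · rintro ⟨a, ⟨ha, hba⟩, rfl⟩
      exact ⟨⟨hP.isPath ha, hba⟩, by simp [hP.apply_eq_one ha]⟩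
  rw [← finsum_mem_inter_support, hsupport, finsum_mem_coe_finset,
    sum_image fun _ ha _ hb => hP.injOn (mem_outArcs.mp (mem_filter.mp ha).1)
      (mem_outArcs.mp (mem_filter.mp hb).1),
    sum_congr rfl fun a ha => hP.apply_eq_one (mem_outArcs.mp (mem_filter.mp ha).1)]
  simp

end IsUnitPathDecomposition

theorem IsFlow.exists_unitPathDecomposition [Fintype A] [DecidableEq V] [Finite V]
    {x : List A → ℚ} (hx : D.IsFlow s t (fun _ => 1) x) (hint : ∀ p, ∃ z : ℤ, x p = z)
    (hval : D.value s t x = #(D.outArcs s)) :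
    ∃ P, D.IsUnitPathDecomposition s t x P := by
  classical
  obtain ⟨h0, hsupp, hcap⟩ := hx
  set paths := (finite_pathSet (D := D) (s := s) (t := t)).toFinset
  have hmem : ∀ {p}, p ∈ paths ↔ D.IsPath s t p := by simp [paths, pathSet]
  have hload : ∀ a, ∑ᶠ p ∈ {p | D.IsPath s t p ∧ a ∈ p}, x p = ∑ p ∈ paths with a ∈ p, x p :=
    fun a => by
      rw [← finsum_mem_coe_finset]
      congr 1; ext p; simp [hmem]
  have hsum : ∑ a ∈ D.outArcs s, ∑ p ∈ paths with a ∈ p, x p = #(D.outArcs s) := calc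
    _ = ∑ p ∈ paths, ∑ a ∈ D.outArcs s with a ∈ p, x p :=
      sum_comm' fun a p => by simp only [mem_filter, hmem]; tauto
    _ = ∑ p ∈ paths, x p := sum_congr rfl fun p hp => by
      rw [sum_const, (hmem.mp hp).card_outArcs_filter_mem, one_smul]
    _ = _ := by rw [← hval, value, ← finsum_mem_coe_finset]; simp [paths]
  have hone_le : ∀ p, x p ≠ 0 → 1 ≤ x p := fun p hp => by
    obtain ⟨z, hz⟩ := hint p
    have : 0 ≤ z := by exact_mod_cast hz ▸ h0 p
    have : z ≠ 0 := by rintro rfl; simp [hz] at hp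
    rw [hz]; exact_mod_cast (by omega : 1 ≤ z)
  have hsat : ∀ a ∈ D.outArcs s, ∑ p ∈ paths with a ∈ p, x p = 1 :=
    (sum_eq_sum_iff_of_le fun a _ => hload a ▸ hcap a).1 (by simp [hsum])
  have hunit : ∀ a, ∃ P, D.tail a = s →
      D.IsPath s t P ∧ x P = 1 ∧ ∀ q, x q ≠ 0 → (a ∈ q ↔ q = P) := by
    intro a
    by_cases ha : D.tail a = s
    · obtain ⟨P, hP, hP1, huniq⟩ := exists_eq_one_of_sum_eq_one (fun p _ => h0 p)
        (fun p _ => hone_le p) (hsat a (mem_outArcs.mpr ha))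
      rw [mem_filter, hmem] at hP
      refine ⟨P, fun _ => ⟨hP.1, hP1, fun q hq => ⟨fun haq => ?_, fun h => h ▸ hP.2⟩⟩⟩
      exact huniq q (mem_filter.mpr ⟨hmem.mpr (hsupp q hq), haq⟩) hq
    · exact ⟨[], fun h => absurd h ha⟩
  choose P hP using hunit
  exact ⟨P, hP⟩

end MultiDigraph

deriving instance DecidableEq for CNode
deriving instance DecidableEq for CArc
deriving instance Fintype for CNode
deriving instance Fintype for CArc

open MultiDigraph

section ArcsOfCD

variable {n r ℓ : ℕ}

lemma cD_tail_ne_t (c : CArc n r ℓ) : (cD n r ℓ).tail c ≠ .t := by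
  cases c <;> simp [cD]

lemma cD_tail_eq_y {c : CArc n r ℓ} {i : Fin n} {b : Bool}
    (h : (cD n r ℓ).tail c = .y i b) : c = .yz i b := by
  cases c <;> simp_all [cD]

lemma cD_tail_eq_s0 {c : CArc n r ℓ} (h : (cD n r ℓ).tail c = .s0) : ∃ i, c = .s0y i := by
  cases c <;> simp_all [cD]

lemma cD_tail_eq_s1 {c : CArc n r ℓ} (h : (cD n r ℓ).tail c = .s1) : ∃ i, c = .s1y i := by
  cases c <;> simp_all [cD]

lemma cD_head_eq_s0 {c : CArc n r ℓ} (h : (cD n r ℓ).head c = .s0) : ∃ j, c = .as0 j := by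
  cases c <;> simp_all [cD]

lemma cD_head_eq_s1 {c : CArc n r ℓ} (h : (cD n r ℓ).head c = .s1) : ∃ j, c = .as1 j := by
  cases c <;> simp_all [cD]

lemma cD_head_eq_y {c : CArc n r ℓ} {i : Fin n} {b : Bool}
    (h : (cD n r ℓ).head c = .y i b) : c = .vy i b ∨ c = .s0y i ∨ c = .s1y i := by
  cases c <;> simp_all [cD]

lemma cD_head_eq_z {c : CArc n r ℓ} {i : Fin n} {b : Bool}
    (h : (cD n r ℓ).head c = .z i b) : c = .yz i b := by
  cases c <;> simp_all [cD]

lemma cD_head_eq_v_succ {c : CArc n r ℓ} {j : Fin n} (h : (cD n r ℓ).head c = .v j.succ) :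
    ∃ b, c = .zv j b := by
  cases c <;> simp_all [cD, eq_comm (a := (0 : Fin (n + 1)))]

end ArcsOfCD

section PathsOfCD

variable {n r ℓ : ℕ} {p : List (CArc n r ℓ)}

lemma exists_yz_false_mem_of_as0_mem (hp : (cD n r ℓ).IsPath .s .t p) {j : Fin r}
    (h : .as0 j ∈ p) : ∃ i, .yz i false ∈ p := by
  obtain ⟨b, hb, hbs0⟩ := hp.exists_succ h (by simp [cD])
  obtain ⟨i, rfl⟩ := cD_tail_eq_s0 hbs0
  obtain ⟨c, hc, hcy⟩ := hp.exists_succ hb (by simp [cD])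
  exact ⟨i, cD_tail_eq_y hcy ▸ hc⟩

lemma exists_yz_true_mem_of_as1_mem (hp : (cD n r ℓ).IsPath .s .t p) {j : Fin (n - r)}
    (h : .as1 j ∈ p) : ∃ i, .yz i true ∈ p := by
  obtain ⟨b, hb, hbs1⟩ := hp.exists_succ h (by simp [cD])
  obtain ⟨i, rfl⟩ := cD_tail_eq_s1 hbs1
  obtain ⟨c, hc, hcy⟩ := hp.exists_succ hb (by simp [cD])
  exact ⟨i, cD_tail_eq_y hcy ▸ hc⟩

lemma eq_singleton_of_ast_mem (hp : (cD n r ℓ).IsPath .s .t p) {j : Fin (ℓ - 1)}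
    (h : .ast j ∈ p) : p = [.ast j] := by
  obtain ⟨_ | ⟨c, l⟩, rfl⟩ := hp.eq_cons_of_tail_eq h rfl
  · rfl
  · exact absurd (List.isChain_cons_cons.mp hp.2.1).1.symm (cD_tail_ne_t c)

/-- On a path through `a_s`, the arc into `y_i^b` must be `(v_i, y_i^b)`: entering through `s⁰` or
`s¹` would leave `s` a second time. -/
lemma exists_vy_mem_of_tail_eq_v_succ (hp : (cD n r ℓ).IsPath .s .t p) (has : .as ∈ p)
    {j : Fin n} {a : CArc n r ℓ} (ha : a ∈ p) (hta : (cD n r ℓ).tail a = .v j.succ) :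
    ∃ b, .yz j b ∈ p ∧ .vy j b ∈ p := by
  obtain ⟨c, hc, hcv⟩ := hp.exists_pred ha (by simp [hta])
  obtain ⟨b, rfl⟩ := cD_head_eq_v_succ (hcv.trans hta)
  obtain ⟨d, hd, hdz⟩ := hp.exists_pred hc (by simp [cD])
  obtain rfl := cD_head_eq_z hdz
  obtain ⟨e, he, hey⟩ := hp.exists_pred hd (by simp [cD])
  rcases cD_head_eq_y hey with rfl | rfl | rfl
  · exact ⟨b, hd, he⟩
  · obtain ⟨f, hf, hfs0⟩ := hp.exists_pred he (by simp [cD])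
    obtain ⟨k, rfl⟩ := cD_head_eq_s0 hfs0
    exact absurd (hp.eq_of_tail_eq hf has rfl) (by simp)
  · obtain ⟨f, hf, hfs1⟩ := hp.exists_pred he (by simp [cD])
    obtain ⟨k, rfl⟩ := cD_head_eq_s1 hfs1
    exact absurd (hp.eq_of_tail_eq hf has rfl) (by simp)

lemma exists_yz_mem_of_as_mem_of_at_mem (hp : (cD n r ℓ).IsPath .s .t p) (has : .as ∈ p)
    (hat : .at' ∈ p) (j : Fin n) : ∃ b, .yz j b ∈ p := by
  have hv : ∀ i : Fin (n + 1), ∃ a ∈ p, (cD n r ℓ).tail a = .v i := by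
    refine Fin.reverseInduction ⟨.at', hat, rfl⟩ fun i ⟨a, ha, hta⟩ => ?_
    obtain ⟨b, -, hvy⟩ := exists_vy_mem_of_tail_eq_v_succ hp has ha hta
    exact ⟨.vy i b, hvy, rfl⟩
  obtain ⟨a, ha, hta⟩ := hv j.succ
  obtain ⟨b, hyz, -⟩ := exists_vy_mem_of_tail_eq_v_succ hp has ha hta
  exact ⟨b, hyz⟩

end PathsOfCD

section CountingOfCD

variable {n r ℓ : ℕ}

def sourceArc : Unit ⊕ Fin r ⊕ Fin (n - r) ⊕ Fin (ℓ - 1) → CArc n r ℓ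
  | .inl _ => .as
  | .inr (.inl j) => .as0 j
  | .inr (.inr (.inl j)) => .as1 j
  | .inr (.inr (.inr j)) => .ast j

lemma sourceArc_injective : (sourceArc (n := n) (r := r) (ℓ := ℓ)).Injective := by
  rintro (_ | _ | _ | _) (_ | _ | _ | _) h <;> simp_all [sourceArc]

lemma outArcs_s_eq_map :
    (cD n r ℓ).outArcs .s = univ.map ⟨sourceArc, sourceArc_injective⟩ := by
  ext a
  cases a <;> simp [mem_outArcs, cD, sourceArc]

lemma card_outArcs_s (hℓ : 1 ≤ ℓ) (hr : r ≤ n) : #((cD n r ℓ).outArcs .s) = n + ℓ := by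
  simp only [outArcs_s_eq_map, card_map, card_univ, Fintype.card_sum, Fintype.card_unit,
    Fintype.card_fin]
  omega

lemma sum_outArcs_s {M : Type*} [AddCommMonoid M] (g : CArc n r ℓ → M) :
    ∑ a ∈ (cD n r ℓ).outArcs .s, g a =
      g .as + ∑ j, g (.as0 j) + ∑ j, g (.as1 j) + ∑ j, g (.ast j) := by
  simp only [outArcs_s_eq_map, sum_map, Function.Embedding.coeFn_mk, Fintype.sum_sum_type,
    univ_unique, sum_singleton, sourceArc, add_assoc]

def vertexArcs (p : List (CArc n r ℓ)) : Finset (Fin n × Bool) := {q | .yz q.1 q.2 ∈ p}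

lemma eq_of_mem_of_card_vertexArcs_eq_one {p : List (CArc n r ℓ)} (h : #(vertexArcs p) = 1)
    {v w : Fin n} {b c : Bool} (hv : .yz v b ∈ p) (hw : .yz w c ∈ p) : (v, b) = (w, c) :=
  card_le_one.mp h.le _ (by simpa [vertexArcs]) _ (by simpa [vertexArcs])

theorem MultiDigraph.IsUnitPathDecomposition.card_vertexArcs {x : List (CArc n r ℓ) → ℚ}
    {P : CArc n r ℓ → List (CArc n r ℓ)} (hr : r ≤ n)
    (hx : (cD n r ℓ).IsFlow .s .t (fun _ => 1) x)
    (hP : (cD n r ℓ).IsUnitPathDecomposition .s .t x P) (hat : .at' ∈ P .as) :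
    (∀ j, #(vertexArcs (P (.as0 j))) = 1) ∧ (∀ j, #(vertexArcs (P (.as1 j))) = 1) ∧
      ∀ q : Fin n × Bool, #{a ∈ (cD n r ℓ).outArcs .s | .yz q.1 q.2 ∈ P a} = 1 := by
  set load : Fin n × Bool → ℕ := fun q => #{a ∈ (cD n r ℓ).outArcs .s | .yz q.1 q.2 ∈ P a}
  have hload : ∀ q, load q ≤ 1 := fun q => by
    have h := hx.2.2 (.yz q.1 q.2)
    rw [hP.finsum_eq_card hx.2.1] at h
    exact Nat.cast_le_one.mp h
  have hdouble : ∑ a ∈ (cD n r ℓ).outArcs .s, #(vertexArcs (P a)) = ∑ q, load q :=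
    sum_card_bipartiteAbove_eq_sum_card_bipartiteBelow _
  have htotal : ∑ q, load q ≤ 2 * n := by
    simpa [mul_comm] using sum_le_card_nsmul univ load 1 fun q _ => hload q
  have has : n ≤ #(vertexArcs (P .as)) := by
    choose b hb using exists_yz_mem_of_as_mem_of_at_mem (hP.isPath rfl) (hP.mem_self rfl) hat
    simpa using card_le_card_of_injOn (s := univ) (fun v => (v, b v))
      (fun v _ => by simpa [vertexArcs] using hb v) (fun v _ w _ h => congrArg Prod.fst h)
  have has0 : ∀ j, 1 ≤ #(vertexArcs (P (.as0 j))) := fun j => by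
    obtain ⟨i, hi⟩ := exists_yz_false_mem_of_as0_mem (hP.isPath rfl) (hP.mem_self rfl)
    exact card_pos.mpr ⟨(i, false), by simpa [vertexArcs]⟩
  have has1 : ∀ j, 1 ≤ #(vertexArcs (P (.as1 j))) := fun j => by
    obtain ⟨i, hi⟩ := exists_yz_true_mem_of_as1_mem (hP.isPath rfl) (hP.mem_self rfl)
    exact card_pos.mpr ⟨(i, true), by simpa [vertexArcs]⟩
  have hast : ∀ j, #(vertexArcs (P (.ast j))) = 0 := fun j => by
    simp [vertexArcs, eq_singleton_of_ast_mem (hP.isPath rfl) (hP.mem_self rfl)]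
  have hsplit := sum_outArcs_s (fun a => #(vertexArcs (P a)))
  simp only [hast, sum_const_zero, add_zero] at hsplit
  have h0 := sum_le_sum fun j (_ : j ∈ univ) => has0 j
  have h1 := sum_le_sum fun j (_ : j ∈ univ) => has1 j
  simp only [sum_const, card_univ, Fintype.card_fin, smul_eq_mul, mul_one] at h0 h1
  have hsum0 : ∑ _j : Fin r, 1 = ∑ j, #(vertexArcs (P (.as0 j))) := by simp; omega
  have hsum1 : ∑ _j : Fin (n - r), 1 = ∑ j, #(vertexArcs (P (.as1 j))) := by simp; omega
  have hsumload : ∑ q, load q = ∑ _q : Fin n × Bool, 1 := by simp; omega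
  exact ⟨fun j => ((sum_eq_sum_iff_of_le fun j _ => has0 j).1 hsum0 j (mem_univ j)).symm,
    fun j => ((sum_eq_sum_iff_of_le fun j _ => has1 j).1 hsum1 j (mem_univ j)).symm,
    fun q => (sum_eq_sum_iff_of_le fun q _ => hload q).1 hsumload q (mem_univ q)⟩

end CountingOfCD

theorem cliqueInterdiction_path_structure_general
    (n r ℓ : ℕ) (hℓ : 1 ≤ ℓ) (hr : r ≤ n) (G : SimpleGraph (Fin n))
    (x : List (CArc n r ℓ) → ℚ) (hx : memXstar n r ℓ G x)
    (P' : List (CArc n r ℓ))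
    (hP'flow : x P' = 1) (hPas : CArc.as ∈ P') (hPat : CArc.at' ∈ P') :
    ∃ Q : Fin (n - r) → List (CArc n r ℓ),
      Function.Injective Q ∧
      (∀ i : Fin (n - r),
        (cD n r ℓ).IsPath CNode.s CNode.t (Q i) ∧ x (Q i) = 1 ∧
        {v : Fin n | CArc.yz v true ∈ Q i}.ncard = 1) ∧
      (∀ v : Fin n, (∀ i : Fin (n - r), CArc.yz v true ∉ Q i) →
        CArc.yz v true ∈ P') := by
  obtain ⟨hflow, hint, hval, -⟩ := hx
  obtain ⟨P, hP⟩ := hflow.exists_unitPathDecomposition hint (by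
    rw [hval, card_outArcs_s hℓ hr]; push_cast; rfl)
  obtain rfl : P' = P .as := hP.eq_of_mem rfl (by simp [hP'flow]) hPas
  obtain ⟨hcard0, hcard1, hcover⟩ := hP.card_vertexArcs hr hflow hPat
  refine ⟨fun j => P (.as1 j), fun i j h => by simpa using hP.injOn rfl rfl h,
    fun j => ⟨hP.isPath rfl, hP.apply_eq_one rfl, ?_⟩, fun v hv => ?_⟩
  · obtain ⟨i, hi⟩ := exists_yz_true_mem_of_as1_mem (hP.isPath rfl) (hP.mem_self rfl)
    rw [Set.ncard_eq_one]
    exact ⟨i, Set.ext fun w => ⟨fun hw => congrArg Prod.fst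
      (eq_of_mem_of_card_vertexArcs_eq_one (hcard1 j) hw hi), fun hw => hw ▸ hi⟩⟩
  · obtain ⟨a, ha⟩ := Finset.card_pos.mp (hcover (v, true)).ge
    rw [Finset.mem_filter, outArcs_s_eq_map, Finset.mem_map] at ha
    obtain ⟨⟨(_ | j | j | j), -, rfl⟩, hva⟩ := ha
    · exact hva
    · obtain ⟨i, hi⟩ := exists_yz_false_mem_of_as0_mem (hP.isPath rfl) (hP.mem_self rfl)
      simpa using eq_of_mem_of_card_vertexArcs_eq_one (hcard0 j) hva hi
    · exact absurd hva (hv j)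
    · have hst := eq_singleton_of_ast_mem (hP.isPath (a := .ast j) rfl) (hP.mem_self rfl)
      simp [sourceArc, hst] at hva

/-- In the clique-interdiction flow construction: for every `x ∈ X*`
and every flow-carrying path `P'` containing `a_s` and `a_t`, there are `r̄ := n − r`
distinct flow-carrying paths `Q_1, …, Q_{r̄}`, each containing exactly one arc of the
form `a_v¹`; moreover every `v ∈ V` whose arc `a_v¹` lies on none of the `Q_i` satisfies
`a_v¹ ∈ P'`. -/
theorem cliqueInterdiction_path_structure
    (n r ℓ : ℕ) (hℓ : 1 ≤ ℓ) (hr : r ≤ n) (G : SimpleGraph (Fin n))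
    (x : List (CArc n r ℓ) → ℚ) (hx : memXstar n r ℓ G x)
    (P' : List (CArc n r ℓ)) (hP'path : (cD n r ℓ).IsPath CNode.s CNode.t P')
    (hP'flow : x P' = 1) (hPas : CArc.as ∈ P') (hPat : CArc.at' ∈ P') :
    ∃ Q : Fin (n - r) → List (CArc n r ℓ),
      Function.Injective Q ∧
      (∀ i : Fin (n - r),
        (cD n r ℓ).IsPath CNode.s CNode.t (Q i) ∧ x (Q i) = 1 ∧
        {v : Fin n | CArc.yz v true ∈ Q i}.ncard = 1) ∧
      (∀ v : Fin n, (∀ i : Fin (n - r), CArc.yz v true ∉ Q i) →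
        CArc.yz v true ∈ P') :=
  cliqueInterdiction_path_structure_general n r ℓ hℓ hr G x hx P' hP'flow hPas hPat
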